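/- arXiv:2006.03280 — 4 statements merged into one kernel-verified Lean document; each statement's English description precedes it below -/
import Mathlib

section
/- Let G = (V, Rmov, Rcom) be a sight-moveable topological graph with base B, let k ≥ 1, and let g ∈ V^k be a connected configuration. Then there exists a connected execution e of some length ℓ with k agents such that e[1] = (B, B, …, B) and e[ℓ] = g; that is, from the configuration in which all k agents are at the base there is an execution reaching g all of whose configurations are connected. -/
/-- A topological graph: a set of vertices with a distinguished base,
a symmetric movement relation containing all self-loops,
and a symmetric communication relation. -/
structure TopoGraph (V : Type) where
  base : V
  mov : V → V → Prop
  com : V → V → Prop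
  mov_symm : ∀ u v, mov u v → mov v u
  mov_refl : ∀ v, mov v v
  com_symm : ∀ u v, com u v → com v u

/-- A configuration `c : Fin k → V` is connected if the subgraph of the
communication graph induced on `{base, c 0, …, c (k-1)}` is connected,
i.e. every `c a` is joined to the base by a communication path staying
inside that vertex set. -/
def TopoGraph.ConnectedConfig {V : Type} (G : TopoGraph V) {k : ℕ}
    (c : Fin k → V) : Prop :=
  ∀ a : Fin k,
    Relation.ReflTransGen
      (fun x y => (x = G.base ∨ ∃ b, c b = x) ∧ (y = G.base ∨ ∃ b, c b = y) ∧ G.com x y)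
      G.base (c a)

/-- `e` is an execution of length `ℓ` with `k` agents: each agent's path follows
movement edges at each of the time steps `0, …, ℓ - 1`. -/
def TopoGraph.IsExecution {V : Type} (G : TopoGraph V) (k ℓ : ℕ)
    (e : Fin k → ℕ → V) : Prop :=
  ∀ a : Fin k, ∀ t : ℕ, t + 1 < ℓ → G.mov (e a t) (e a (t + 1))

/-- An execution of length `ℓ` is connected if all its configurations are connected. -/
def TopoGraph.ConnectedExec {V : Type} (G : TopoGraph V) {k : ℕ} (ℓ : ℕ)
    (e : Fin k → ℕ → V) : Prop :=
  ∀ t < ℓ, G.ConnectedConfig (fun a => e a t)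

/-- A topological graph is sight-moveable if whenever `com v v'` holds, there is a
movement path from `v` to `v'` all of whose vertices before reaching `v'`
communicate with `v'`. -/
def TopoGraph.SightMoveable {V : Type} (G : TopoGraph V) : Prop :=
  ∀ v v', G.com v v' →
    ∃ (n : ℕ) (p : ℕ → V), p 0 = v ∧ p n = v' ∧
      (∀ i < n, G.mov (p i) (p (i + 1))) ∧
      (∀ i < n, G.com (p i) v')

section ConnExecAux

open Relation

variable {V : Type}

/-- Reversed sight-moveable segment: a movement path from `x` to `y` all of whose
vertices communicate with `x` (or equal `x`). -/
private lemma TopoGraph.seg (G : TopoGraph V) (hSM : G.SightMoveable) {x y : V}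
    (h : G.com x y) :
    ∃ n, ∃ q : ℕ → V, q 0 = x ∧ q n = y ∧ (∀ i < n, G.mov (q i) (q (i + 1))) ∧
      (∀ i ≤ n, q i = x ∨ G.com (q i) x) := by
  obtain ⟨m, p, hp0, hpm, hmov, hcom⟩ := hSM y x (G.com_symm _ _ h)
  refine ⟨m, fun j => p (m - j), by simpa using hpm, by simpa using hp0, ?_, ?_⟩
  · intro i hi
    have h1 : m - (i + 1) + 1 = m - i := by omega
    have h2 := hmov (m - (i + 1)) (by omega)
    rw [h1] at h2
    exact G.mov_symm _ _ h2
  · intro i hi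
    rcases Nat.eq_zero_or_pos i with h0 | h0
    · left; simp [h0, hpm]
    · right; exact hcom (m - i) (by omega)

/-- From a communication walk starting at the base whose sources stay in `T`,
build a movement path each of whose vertices is anchored (by equality or
communication) at some vertex of `T`. -/
private lemma TopoGraph.walk (G : TopoGraph V) (hSM : G.SightMoveable) (T : V → Prop)
    (hB : T G.base) {v : V}
    (h : Relation.ReflTransGen (fun a b => T a ∧ G.com a b) G.base v) :
    ∃ n, ∃ q : ℕ → V, q 0 = G.base ∧ q n = v ∧ (∀ i < n, G.mov (q i) (q (i + 1))) ∧
      (∀ i ≤ n, ∃ z, T z ∧ (q i = z ∨ G.com (q i) z)) := by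
  induction h with
  | refl =>
      exact ⟨0, fun _ => G.base, rfl, rfl, fun i hi => by omega,
        fun i _ => ⟨G.base, hB, Or.inl rfl⟩⟩
  | @tail m w hbm hmw ih =>
      obtain ⟨n, q, hq0, hqn, hqmov, hqanc⟩ := ih
      obtain ⟨hmT, hcom⟩ := hmw
      obtain ⟨n', r, hr0, hrn, hrmov, hranc⟩ := G.seg hSM hcom
      have hkey : ∀ j, n ≤ j → (if j ≤ n then q j else r (j - n)) = r (j - n) := by
        intro j hj
        by_cases hc : j ≤ n
        · have hjn : j = n := le_antisymm hc hj
          subst hjn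
          simp only [le_refl, if_pos, Nat.sub_self]
          rw [hqn, ← hr0]
        · simp [hc]
      refine ⟨n + n', fun i => if i ≤ n then q i else r (i - n), by simp [hq0], ?_, ?_, ?_⟩
      · beta_reduce
        rw [hkey (n + n') (by omega)]
        have : n + n' - n = n' := by omega
        rw [this, hrn]
      · intro i hi
        by_cases h1 : i + 1 ≤ n
        · have h2 : i ≤ n := by omega
          simp only [if_pos h1, if_pos h2]
          exact hqmov i (by omega)
        · have h2 : n ≤ i := by omega
          beta_reduce
          rw [hkey i h2, hkey (i + 1) (by omega)]
          have h3 : i + 1 - n = (i - n) + 1 := by omega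
          rw [h3]
          exact hrmov (i - n) (by omega)
      · intro i hi
        by_cases h1 : i ≤ n
        · simp only [if_pos h1]
          exact hqanc i h1
        · beta_reduce
          rw [hkey i (by omega)]
          exact ⟨m, hmT, hranc (i - n) (by omega)⟩

private lemma crossing_lemma {α : Type*} {R : α → α → Prop} {T : α → Prop} {a v : α}
    (h : Relation.ReflTransGen R a v) :
    T a → ¬ T v → ∃ x y, T x ∧ ¬ T y ∧ R x y := by
  induction h with
  | refl => intro ha hv; exact absurd ha hv
  | @tail b c hab hbc ih =>
      intro ha hc
      by_cases hb : T b
      · exact ⟨b, c, hb, hc, hbc⟩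
      · exact ih ha hb

private lemma liftRTG (G : TopoGraph V) {k : ℕ} (c : Fin k → V) (T : V → Prop)
    (hocc : ∀ v, T v → v = G.base ∨ ∃ b, c b = v) {v : V}
    (h : Relation.ReflTransGen (fun a b => T a ∧ T b ∧ G.com a b) G.base v) :
    Relation.ReflTransGen
      (fun x y => (x = G.base ∨ ∃ b, c b = x) ∧ (y = G.base ∨ ∃ b, c b = y) ∧ G.com x y)
      G.base v :=
  Relation.ReflTransGen.mono (fun _ _ hab => ⟨hocc _ hab.1, hocc _ hab.2.1, hab.2.2⟩) _ _ h

end ConnExecAux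

section ConnExecExtend
open Relation
variable {V : Type}

private lemma TopoGraph.extend [DecidableEq V] (G : TopoGraph V) (hSM : G.SightMoveable)
    {k : ℕ} (g : Fin k → V) (T : Finset V)
    (hB : G.base ∈ T)
    (hTg : ∀ v ∈ T, v = G.base ∨ ∃ b, g b = v)
    (hTconn : ∀ v ∈ T, Relation.ReflTransGen (fun a b => a ∈ T ∧ b ∈ T ∧ G.com a b) G.base v)
    {s x : V} (hs : s ∉ T) (hx : x ∈ T) (hcom : G.com x s)
    (ℓ : ℕ) (e : Fin k → ℕ → V) (hℓ : 1 ≤ ℓ)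
    (hex : G.IsExecution k ℓ e) (hconn : G.ConnectedExec ℓ e)
    (h0 : ∀ a, e a 0 = G.base)
    (hfin : ∀ a, e a (ℓ - 1) = if g a ∈ T then g a else G.base) :
    ∃ ℓ', ∃ e' : Fin k → ℕ → V, 1 ≤ ℓ' ∧ G.IsExecution k ℓ' e' ∧ G.ConnectedExec ℓ' e' ∧
      (∀ a, e' a 0 = G.base) ∧
      (∀ a, e' a (ℓ' - 1) = if g a ∈ insert s T then g a else G.base) := by
  have hweak : Relation.ReflTransGen (fun a b => a ∈ T ∧ G.com a b) G.base s :=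
    Relation.ReflTransGen.tail
      (Relation.ReflTransGen.mono (fun _ _ hab => ⟨hab.1, hab.2.2⟩) _ _ (hTconn x hx)) ⟨hx, hcom⟩
  obtain ⟨n, q, hq0, hqn, hqmov, hqanc⟩ := G.walk hSM (· ∈ T) hB hweak
  have hn : 1 ≤ n := by
    rcases Nat.eq_zero_or_pos n with h | h
    · exfalso; subst h; exact hs (by rw [← hqn, hq0]; exact hB)
    · exact h
  -- the second-phase positions
  set f : Fin k → ℕ → V := fun a j => if g a = s then q j else e a (ℓ - 1) with hf
  have hf0 : ∀ a, f a 0 = e a (ℓ - 1) := by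
    intro a
    by_cases hgs : g a = s
    · have hgT : g a ∉ T := hgs ▸ hs
      simp [hf, hgs, hq0, hfin a, hs]
    · simp [hf, hgs]
  have hmovf : ∀ a, ∀ j < n, G.mov (f a j) (f a (j + 1)) := by
    intro a j hj
    by_cases hgs : g a = s
    · simp only [hf, hgs, if_pos]
      exact hqmov j hj
    · simp only [hf, hgs, if_neg, ite_false]
      exact G.mov_refl _
  refine ⟨ℓ + n, fun a t => if t < ℓ then e a t else f a (t - (ℓ - 1)), by omega, ?_, ?_, ?_, ?_⟩
  · -- IsExecution
    intro a t ht
    beta_reduce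
    rcases lt_trichotomy (t + 1) ℓ with h1 | h1 | h1
    · rw [if_pos (by omega : t < ℓ), if_pos h1]
      exact hex a t h1
    · rw [if_pos (by omega : t < ℓ), if_neg (by omega : ¬ t + 1 < ℓ)]
      have ht1 : t = ℓ - 1 := by omega
      have ht2 : t + 1 - (ℓ - 1) = 1 := by omega
      rw [ht2, ht1, ← hf0 a]
      exact hmovf a 0 hn
    · rw [if_neg (by omega : ¬ t < ℓ), if_neg (by omega : ¬ t + 1 < ℓ)]
      have ht2 : t + 1 - (ℓ - 1) = (t - (ℓ - 1)) + 1 := by omega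
      rw [ht2]
      exact hmovf a (t - (ℓ - 1)) (by omega)
  · -- ConnectedExec
    intro t ht
    by_cases h1 : t < ℓ
    · have hcfg : (fun a => if t < ℓ then e a t else f a (t - (ℓ - 1))) = fun a => e a t := by
        funext a; rw [if_pos h1]
      exact hcfg ▸ hconn t h1
    · have hcfg : (fun a => if t < ℓ then e a t else f a (t - (ℓ - 1)))
          = fun a => f a (t - (ℓ - 1)) := by
        funext a; rw [if_neg h1]
      rw [hcfg]
      set j := t - (ℓ - 1) with hj
      have hjn : j ≤ n := by omega
      set c : Fin k → V := fun a => f a j with hc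
      -- occupancy of T under c
      have hocc : ∀ v, v ∈ T → v = G.base ∨ ∃ b, c b = v := by
        intro v hv
        rcases hTg v hv with h | ⟨b, hb⟩
        · exact Or.inl h
        · refine Or.inr ⟨b, ?_⟩
          have hbs : g b ≠ s := by rw [hb]; intro h; exact hs (h ▸ hv)
          simp only [hc, hf, if_neg hbs, hfin b, hb]
          exact if_pos hv
      have hlift : ∀ v ∈ T, Relation.ReflTransGen
          (fun x y => (x = G.base ∨ ∃ b, c b = x) ∧ (y = G.base ∨ ∃ b, c b = y) ∧ G.com x y)
          G.base v := fun v hv => liftRTG G c (· ∈ T) hocc (hTconn v hv)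
      intro a
      by_cases hgs : g a = s
      · have hca : c a = q j := by simp [hc, hf, hgs]
        rw [hca]
        obtain ⟨z, hzT, hz⟩ := hqanc j hjn
        rcases hz with hz | hz
        · rw [hz]; exact hlift z hzT
        · refine Relation.ReflTransGen.tail (hlift z hzT) ?_
          exact ⟨hocc z hzT, Or.inr ⟨a, hca⟩, G.com_symm _ _ hz⟩
      · have hca : c a = e a (ℓ - 1) := by simp [hc, hf, hgs]
        rw [hca, hfin a]
        by_cases hgT : g a ∈ T
        · rw [if_pos hgT]; exact hlift _ hgT
        · rw [if_neg hgT]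
  · intro a
    beta_reduce
    rw [if_pos (by omega : 0 < ℓ)]
    exact h0 a
  · intro a
    beta_reduce
    rw [if_neg (by omega : ¬ ℓ + n - 1 < ℓ)]
    have harith : ℓ + n - 1 - (ℓ - 1) = n := by omega
    rw [harith]
    by_cases hgs : g a = s
    · rw [if_pos (by rw [hgs]; exact Finset.mem_insert_self s T)]
      simp [hf, hgs, hqn]
    · have hmem : (g a ∈ insert s T) ↔ g a ∈ T := by
        simp [Finset.mem_insert, hgs]
      simp only [hf, if_neg hgs, hfin a, hmem]

end ConnExecExtend

section ConnExecMain
open Relation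
variable {V : Type}

private lemma TopoGraph.reach [DecidableEq V] (G : TopoGraph V) (hSM : G.SightMoveable)
    {k : ℕ} (g : Fin k → V) (hg : G.ConnectedConfig g) :
    ∀ N : ℕ, ∀ T : Finset V, G.base ∈ T →
      (∀ v ∈ T, v = G.base ∨ ∃ b, g b = v) →
      (∀ v ∈ T, Relation.ReflTransGen (fun a b => a ∈ T ∧ b ∈ T ∧ G.com a b) G.base v) →
      (Finset.univ.filter (fun a => g a ∉ T)).card ≤ N →
      (∃ ℓ, ∃ e : Fin k → ℕ → V, 1 ≤ ℓ ∧ G.IsExecution k ℓ e ∧ G.ConnectedExec ℓ e ∧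
        (∀ a, e a 0 = G.base) ∧ (∀ a, e a (ℓ - 1) = if g a ∈ T then g a else G.base)) →
      ∃ ℓ, ∃ e : Fin k → ℕ → V, 1 ≤ ℓ ∧ G.IsExecution k ℓ e ∧ G.ConnectedExec ℓ e ∧
        (∀ a, e a 0 = G.base) ∧ (∀ a, e a (ℓ - 1) = g a) := by
  intro N
  induction N with
  | zero =>
      intro T hB hTg hTconn hcard hclaim
      have hall : ∀ a, g a ∈ T := by
        intro a
        by_contra h
        have hmem : a ∈ Finset.univ.filter (fun a => g a ∉ T) :=
          Finset.mem_filter.2 ⟨Finset.mem_univ a, h⟩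
        have := Finset.card_pos.2 ⟨a, hmem⟩
        omega
      obtain ⟨ℓ, e, h1, h2, h3, h4, h5⟩ := hclaim
      exact ⟨ℓ, e, h1, h2, h3, h4, fun a => by rw [h5 a, if_pos (hall a)]⟩
  | succ N ih =>
      intro T hB hTg hTconn hcard hclaim
      by_cases hall : ∀ a, g a ∈ T
      · obtain ⟨ℓ, e, h1, h2, h3, h4, h5⟩ := hclaim
        exact ⟨ℓ, e, h1, h2, h3, h4, fun a => by rw [h5 a, if_pos (hall a)]⟩
      · push_neg at hall
        obtain ⟨a, ha⟩ := hall
        obtain ⟨x, y, hxT, hyT, hR⟩ := crossing_lemma (T := (· ∈ T)) (hg a) hB ha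
        obtain ⟨hx', hy', hcomxy⟩ := hR
        have hyg : ∃ b, g b = y := by
          rcases hy' with h | h
          · exact absurd (h ▸ hB) hyT
          · exact h
        obtain ⟨b, hb⟩ := hyg
        -- properties of T' = insert y T
        have hB' : G.base ∈ insert y T := Finset.mem_insert_of_mem hB
        have hTg' : ∀ v ∈ insert y T, v = G.base ∨ ∃ b, g b = v := by
          intro v hv
          rcases Finset.mem_insert.1 hv with h | h
          · exact Or.inr ⟨b, h ▸ hb⟩
          · exact hTg v h
        have hTconn' : ∀ v ∈ insert y T,
            Relation.ReflTransGen (fun a b => a ∈ insert y T ∧ b ∈ insert y T ∧ G.com a b)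
              G.base v := by
          intro v hv
          rcases Finset.mem_insert.1 hv with h | h
          · subst h
            refine Relation.ReflTransGen.tail
              (Relation.ReflTransGen.mono (fun _ _ hab =>
                ⟨Finset.mem_insert_of_mem hab.1, Finset.mem_insert_of_mem hab.2.1, hab.2.2⟩) _ _ (hTconn x hxT)) ?_
            exact ⟨Finset.mem_insert_of_mem hxT, Finset.mem_insert_self _ _, hcomxy⟩
          · exact Relation.ReflTransGen.mono (fun _ _ hab =>
              ⟨Finset.mem_insert_of_mem hab.1, Finset.mem_insert_of_mem hab.2.1, hab.2.2⟩) _ _ (hTconn v h)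
        have hcard' : (Finset.univ.filter (fun a => g a ∉ insert y T)).card ≤ N := by
          have hss : Finset.univ.filter (fun a => g a ∉ insert y T)
              ⊂ Finset.univ.filter (fun a => g a ∉ T) := by
            constructor
            · intro c hc
              rw [Finset.mem_filter] at hc ⊢
              exact ⟨hc.1, fun h => hc.2 (Finset.mem_insert_of_mem h)⟩
            · intro hsub
              have hbmem : b ∈ Finset.univ.filter (fun a => g a ∉ T) :=
                Finset.mem_filter.2 ⟨Finset.mem_univ b, hb ▸ hyT⟩
              have := hsub hbmem
              rw [Finset.mem_filter] at this
              exact this.2 (hb ▸ Finset.mem_insert_self y T)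
          have := Finset.card_lt_card hss
          omega
        obtain ⟨ℓ, e, h1, h2, h3, h4, h5⟩ := hclaim
        have hclaim' := G.extend hSM g T hB hTg hTconn hyT hxT hcomxy ℓ e h1 h2 h3 h4 h5
        exact ih (insert y T) hB' hTg' hTconn' hcard' hclaim'

end ConnExecMain

/-- In a sight-moveable topological graph, for every connected goal
configuration `g` there is a connected execution from the configuration where
all `k ≥ 1` agents are at the base to `g`. -/
theorem exists_connected_exec_from_base {V : Type} [Fintype V] (G : TopoGraph V)
    (hSM : G.SightMoveable) (k : ℕ) (hk : 1 ≤ k) (g : Fin k → V)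
    (hg : G.ConnectedConfig g) :
    ∃ (ℓ : ℕ) (e : Fin k → ℕ → V), 1 ≤ ℓ ∧
      G.IsExecution k ℓ e ∧ G.ConnectedExec ℓ e ∧
      (∀ a, e a 0 = G.base) ∧ (∀ a, e a (ℓ - 1) = g a) := by
  classical
  refine G.reach hSM g hg k {G.base} (Finset.mem_singleton_self _) ?_ ?_ ?_ ?_
  · intro v hv
    exact Or.inl (Finset.mem_singleton.mp hv)
  · intro v hv
    rw [Finset.mem_singleton.mp hv]
  · calc (Finset.univ.filter (fun a => g a ∉ ({G.base} : Finset V))).card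
        ≤ Finset.univ.card := Finset.card_filter_le _ _
      _ = k := by simp
  · refine ⟨1, fun _ _ => G.base, le_refl 1, ?_, ?_, fun a => rfl, ?_⟩
    · intro a t ht
      exact absurd ht (by omega)
    · intro t ht a
      exact Relation.ReflTransGen.refl
    · intro a
      by_cases h : g a ∈ ({G.base} : Finset V)
      · rw [if_pos h, Finset.mem_singleton.mp h]
      · rw [if_neg h]
end

section
/- Let G = (V, Rmov, Rcom) be a sight-moveable topological graph with base B, let k ≥ 1, and let s, g ∈ V^k be two connected configurations. Then there exists a connected execution e of some length ℓ with k agents such that e[1] = s and e[ℓ] = g. -/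
namespace TGAux

open Relation

variable {V : Type} (G : TopoGraph V) {k : ℕ}

/-- Membership in the vertex set of a configuration (plus the base). -/
def InS (c : Fin k → V) (x : V) : Prop := x = G.base ∨ ∃ b, c b = x

/-- The induced communication relation of a configuration. -/
def Rc (c : Fin k → V) (x y : V) : Prop := InS G c x ∧ InS G c y ∧ G.com x y

lemma connectedConfig_iff (c : Fin k → V) :
    G.ConnectedConfig c ↔ ∀ a, ReflTransGen (Rc G c) G.base (c a) := Iff.rfl

/-- Paths of a fixed length for an arbitrary relation. -/
def PathN (Rel : V → V → Prop) (n : ℕ) (x y : V) : Prop :=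
  ∃ p : ℕ → V, p 0 = x ∧ p n = y ∧ ∀ i < n, Rel (p i) (p (i + 1))

lemma pathN_zero (Rel : V → V → Prop) (x : V) : PathN Rel 0 x x :=
  ⟨fun _ => x, rfl, rfl, fun i hi => absurd hi (Nat.not_lt_zero i)⟩

lemma pathN_snoc {Rel : V → V → Prop} {n : ℕ} {x y z : V}
    (h : PathN Rel n x y) (hz : Rel y z) : PathN Rel (n + 1) x z := by
  obtain ⟨p, hp0, hpn, hpe⟩ := h
  refine ⟨fun i => if i ≤ n then p i else z, by simp [hp0], by simp, ?_⟩
  intro i hi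
  rcases Nat.lt_or_ge i n with hin | hin
  · have h1 : i ≤ n := le_of_lt hin
    have h2 : i + 1 ≤ n := hin
    simp only [if_pos h1, if_pos h2]
    exact hpe i hin
  · have hieq : i = n := by omega
    subst hieq
    have h2 : ¬ (i + 1 ≤ i) := by omega
    simp only [if_pos (le_refl i), if_neg h2]
    exact hpn ▸ hz

lemma pathN_reflTransGen {Rel : V → V → Prop} :
    ∀ {n : ℕ} {x y : V}, PathN Rel n x y → ReflTransGen Rel x y := by
  intro n
  induction n with
  | zero =>
    rintro x y ⟨p, hp0, hpn, -⟩
    rw [← hpn, hp0]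
  | succ n ih =>
    rintro x y ⟨p, hp0, hpn, hpe⟩
    exact (ih ⟨p, hp0, rfl, fun i hi => hpe i (Nat.lt_succ_of_lt hi)⟩).tail
      (hpn ▸ hpe n (Nat.lt_succ_self n))

lemma reflTransGen_pathN {Rel : V → V → Prop} {x y : V}
    (h : ReflTransGen Rel x y) : ∃ n, PathN Rel n x y := by
  induction h with
  | refl => exact ⟨0, pathN_zero Rel x⟩
  | tail _ hz ih =>
    obtain ⟨n, hp⟩ := ih
    exact ⟨n + 1, pathN_snoc hp hz⟩

open Classical in
/-- Distance from `x` to `y` along a relation (0 if unreachable). -/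
noncomputable def dC (Rel : V → V → Prop) (x y : V) : ℕ :=
  if h : ∃ n, PathN Rel n x y then Nat.find h else 0

lemma dC_le {Rel : V → V → Prop} {x y : V} {n : ℕ} (h : PathN Rel n x y) :
    dC Rel x y ≤ n := by
  classical
  rw [dC, dif_pos ⟨n, h⟩]
  exact Nat.find_le h

lemma pathN_dC {Rel : V → V → Prop} {x y : V}
    (h : ReflTransGen Rel x y) : PathN Rel (dC Rel x y) x y := by
  classical
  have h' := reflTransGen_pathN h
  rw [dC, dif_pos h']
  exact Nat.find_spec h'

/-- There is a connected execution from `c` to `c'`. -/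
def EB (c c' : Fin k → V) : Prop :=
  ∃ (ℓ : ℕ) (e : Fin k → ℕ → V), 1 ≤ ℓ ∧
    G.IsExecution k ℓ e ∧ G.ConnectedExec ℓ e ∧
    (∀ a, e a 0 = c a) ∧ (∀ a, e a (ℓ - 1) = c' a)

lemma EB_refl {c : Fin k → V} (hc : G.ConnectedConfig c) : EB G c c := by
  refine ⟨1, fun a _ => c a, le_refl 1, ?_, ?_, fun a => rfl, fun a => rfl⟩
  · intro a t ht; omega
  · intro t ht; exact hc

lemma EB_symm {c c' : Fin k → V} (h : EB G c c') : EB G c' c := by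
  obtain ⟨ℓ, e, hℓ, hex, hconn, h0, h1⟩ := h
  refine ⟨ℓ, fun a t => e a (ℓ - 1 - t), hℓ, ?_, ?_, ?_, ?_⟩
  · intro a t ht
    have harith : ℓ - 1 - (t + 1) + 1 = ℓ - 1 - t := by omega
    have := hex a (ℓ - 1 - (t + 1)) (by omega)
    rw [harith] at this
    exact G.mov_symm _ _ this
  · intro t ht
    exact hconn (ℓ - 1 - t) (by omega)
  · intro a
    show e a (ℓ - 1 - 0) = c' a
    have : ℓ - 1 - 0 = ℓ - 1 := by omega
    rw [this]; exact h1 a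
  · intro a
    show e a (ℓ - 1 - (ℓ - 1)) = c a
    have : ℓ - 1 - (ℓ - 1) = 0 := by omega
    rw [this]; exact h0 a

lemma EB_trans {c c' c'' : Fin k → V} (h : EB G c c') (h' : EB G c' c'') :
    EB G c c'' := by
  obtain ⟨ℓ₁, e₁, hℓ₁, hex₁, hconn₁, h10, h11⟩ := h
  obtain ⟨ℓ₂, e₂, hℓ₂, hex₂, hconn₂, h20, h21⟩ := h'
  have hglue : ∀ a, e₁ a (ℓ₁ - 1) = e₂ a 0 := fun a => (h11 a).trans (h20 a).symm
  refine ⟨ℓ₁ + ℓ₂ - 1, fun a t => if t < ℓ₁ then e₁ a t else e₂ a (t - (ℓ₁ - 1)),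
    by omega, ?_, ?_, ?_, ?_⟩
  · intro a t ht
    rcases Nat.lt_or_ge (t + 1) ℓ₁ with h1 | h1
    · simp only [if_pos (by omega : t < ℓ₁), if_pos h1]
      exact hex₁ a t h1
    · rcases Nat.lt_or_ge t ℓ₁ with h2 | h2
      · have hteq : t = ℓ₁ - 1 := by omega
        have hl2 : 1 < ℓ₂ := by omega
        simp only [if_pos h2, if_neg (by omega : ¬ t + 1 < ℓ₁)]
        have harith : t + 1 - (ℓ₁ - 1) = 1 := by omega
        rw [harith, hteq, hglue a]
        exact hex₂ a 0 hl2
      · simp only [if_neg (by omega : ¬ t < ℓ₁), if_neg (by omega : ¬ t + 1 < ℓ₁)]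
        have harith : t + 1 - (ℓ₁ - 1) = (t - (ℓ₁ - 1)) + 1 := by omega
        rw [harith]
        exact hex₂ a (t - (ℓ₁ - 1)) (by omega)
  · intro t ht
    rcases Nat.lt_or_ge t ℓ₁ with h1 | h1
    · simp only [if_pos h1]
      exact hconn₁ t h1
    · simp only [if_neg (by omega : ¬ t < ℓ₁)]
      exact hconn₂ (t - (ℓ₁ - 1)) (by omega)
  · intro a
    simp only [if_pos (by omega : (0:ℕ) < ℓ₁)]
    exact h10 a
  · intro a
    rcases Nat.lt_or_ge (ℓ₁ + ℓ₂ - 1 - 1) ℓ₁ with h1 | h1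
    · have hl2 : ℓ₂ = 1 := by omega
      simp only [if_pos h1]
      have harith : ℓ₁ + ℓ₂ - 1 - 1 = ℓ₁ - 1 := by omega
      rw [harith, h11 a, ← h20 a]
      have h02 : (0 : ℕ) = ℓ₂ - 1 := by omega
      rw [h02]
      exact h21 a
    · simp only [if_neg (by omega : ¬ ℓ₁ + ℓ₂ - 1 - 1 < ℓ₁)]
      have harith : ℓ₁ + ℓ₂ - 1 - 1 - (ℓ₁ - 1) = ℓ₂ - 1 := by omega
      rw [harith]
      exact h21 a

lemma step (hk : 1 ≤ k) (hSM : G.SightMoveable) (c : Fin k → V)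
    (hc : G.ConnectedConfig c)
    (hpos : 0 < ∑ b : Fin k, dC (Rc G c) G.base (c b)) :
    ∃ c' : Fin k → V, G.ConnectedConfig c' ∧ EB G c c' ∧
      ∑ b : Fin k, dC (Rc G c') G.base (c' b) <
        ∑ b : Fin k, dC (Rc G c) G.base (c b) := by
  classical
  have hcr : ∀ a, ReflTransGen (Rc G c) G.base (c a) := hc
  -- pick an agent at maximal distance
  have hne : (Finset.univ : Finset (Fin k)).Nonempty :=
    ⟨⟨0, hk⟩, Finset.mem_univ _⟩
  obtain ⟨a, -, ha⟩ := Finset.exists_max_image Finset.univ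
    (fun b => dC (Rc G c) G.base (c b)) hne
  set d := dC (Rc G c) G.base (c a) with hd_def
  have hd : 0 < d := by
    by_contra h
    have hz : ∀ b : Fin k, dC (Rc G c) G.base (c b) = 0 := by
      intro b
      have := ha b (Finset.mem_univ b)
      omega
    rw [Finset.sum_eq_zero (fun b _ => hz b)] at hpos
    omega
  have hnea : ∀ x, dC (Rc G c) G.base x < d → x ≠ c a := by
    intro x hx hxa
    rw [hxa] at hx
    omega
  -- shortest path to c a
  obtain ⟨q, hq0, hqd, hqe⟩ := pathN_dC (hcr a)
  have hqi : ∀ i ≤ d, dC (Rc G c) G.base (q i) ≤ i := by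
    intro i hi
    exact dC_le ⟨q, hq0, rfl, fun j hj => hqe j (by omega)⟩
  have hd1 : d - 1 + 1 = d := by omega
  have hedge : Rc G c (q (d - 1)) (c a) := by
    have := hqe (d - 1) (by omega)
    rw [hd1, hqd] at this
    exact this
  have hv'd : dC (Rc G c) G.base (q (d - 1)) ≤ d - 1 := hqi (d - 1) (by omega)
  have hv'reach : ReflTransGen (Rc G c) G.base (q (d - 1)) :=
    pathN_reflTransGen ⟨q, hq0, rfl, fun j hj => hqe j (by omega)⟩
  -- sight-moveable path from c a to v' := q (d-1)
  obtain ⟨n, p, hp0, hpn, hpm, hpc⟩ := hSM (c a) (q (d - 1))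
    (G.com_symm _ _ hedge.2.2)
  -- the moving configurations
  set ct : ℕ → (Fin k → V) := fun t => Function.update c a (p (min t n)) with hct_def
  have hct_a : ∀ t, ct t a = p (min t n) := by
    intro t; simp [hct_def]
  have hct_b : ∀ t, ∀ b, b ≠ a → ct t b = c b := by
    intro t b hb; simp [hct_def, Function.update_of_ne hb]
  -- membership preservation
  have hmemS : ∀ t x, InS G c x → x ≠ c a → InS G (ct t) x := by
    intro t x hx hxa
    rcases hx with h | ⟨b, hb⟩
    · exact Or.inl h
    · have hba : b ≠ a := by
        intro h; rw [h] at hb; exact hxa hb.symm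
      exact Or.inr ⟨b, by rw [hct_b t b hba]; exact hb⟩
  -- reachability of low-distance vertices in the moving configurations
  have hA : ∀ (m : ℕ) (t : ℕ) (x : V), ReflTransGen (Rc G c) G.base x →
      dC (Rc G c) G.base x ≤ m → dC (Rc G c) G.base x < d →
      ReflTransGen (Rc G (ct t)) G.base x ∧ InS G (ct t) x := by
    intro m
    induction m with
    | zero =>
      intro t x hx hm _
      have h0 : dC (Rc G c) G.base x = 0 := by omega
      have hpx := pathN_dC hx
      rw [h0] at hpx
      obtain ⟨r, hr0, hrm, -⟩ := hpx
      have hxb : x = G.base := by rw [← hrm, hr0]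
      subst hxb
      exact ⟨ReflTransGen.refl, Or.inl rfl⟩
    | succ m ih =>
      intro t x hx hm hxd
      rcases Nat.eq_zero_or_pos (dC (Rc G c) G.base x) with h0 | h0
      · have hpx := pathN_dC hx
        rw [h0] at hpx
        obtain ⟨r, hr0, hrm, -⟩ := hpx
        have hxb : x = G.base := by rw [← hrm, hr0]
        subst hxb
        exact ⟨ReflTransGen.refl, Or.inl rfl⟩
      · obtain ⟨r, hr0, hrm, hre⟩ := pathN_dC hx
        set mx := dC (Rc G c) G.base x with hmx_def
        have hy_le : dC (Rc G c) G.base (r (mx - 1)) ≤ mx - 1 :=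
          dC_le ⟨r, hr0, rfl, fun j hj => hre j (by omega)⟩
        have hy_reach : ReflTransGen (Rc G c) G.base (r (mx - 1)) :=
          pathN_reflTransGen ⟨r, hr0, rfl, fun j hj => hre j (by omega)⟩
        obtain ⟨hy1, hy2⟩ := ih t (r (mx - 1)) hy_reach (by omega) (by omega)
        have hmx1 : mx - 1 + 1 = mx := by omega
        have hedge' : Rc G c (r (mx - 1)) x := by
          have := hre (mx - 1) (by omega)
          rw [hmx1, hrm] at this
          exact this
        have hxS : InS G (ct t) x := hmemS t x hedge'.2.1 (hnea x hxd)
        exact ⟨hy1.tail ⟨hy2, hxS, hedge'.2.2⟩, hxS⟩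
  -- reachability of the stationary agents
  have hB : ∀ (t : ℕ) (b : Fin k), b ≠ a →
      ReflTransGen (Rc G (ct t)) G.base (c b) := by
    intro t b hba
    set mb := dC (Rc G c) G.base (c b) with hmb_def
    have hmb_le : mb ≤ d := ha b (Finset.mem_univ b)
    rcases Nat.eq_zero_or_pos mb with h0 | h0
    · have hpx := pathN_dC (hcr b)
      rw [← hmb_def, h0] at hpx
      obtain ⟨r, hr0, hrm, -⟩ := hpx
      have : c b = G.base := by rw [← hrm, hr0]
      rw [this]
    · obtain ⟨r, hr0, hrm, hre⟩ := pathN_dC (hcr b)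
      have hy_le : dC (Rc G c) G.base (r (mb - 1)) ≤ mb - 1 :=
        dC_le ⟨r, hr0, rfl, fun j hj => hre j (by omega)⟩
      have hy_reach : ReflTransGen (Rc G c) G.base (r (mb - 1)) :=
        pathN_reflTransGen ⟨r, hr0, rfl, fun j hj => hre j (by omega)⟩
      obtain ⟨hy1, hy2⟩ := hA (mb - 1) t (r (mb - 1)) hy_reach hy_le (by omega)
      have hmb1 : mb - 1 + 1 = mb := by omega
      have hedge' : Rc G c (r (mb - 1)) (c b) := by
        have := hre (mb - 1) (by omega)
        rw [hmb1, hrm] at this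
        exact this
      have hxS : InS G (ct t) (c b) := Or.inr ⟨b, hct_b t b hba⟩
      exact hy1.tail ⟨hy2, hxS, hedge'.2.2⟩
  -- reachability of the moving agent
  have hC : ∀ t ≤ n, ReflTransGen (Rc G (ct t)) G.base (ct t a) := by
    intro t ht
    have hmin : min t n = t := by omega
    obtain ⟨hv1, hv2⟩ := hA (d - 1) t (q (d - 1)) hv'reach hv'd (by omega)
    rcases Nat.lt_or_ge t n with htn | htn
    · have hcom : G.com (p t) (q (d - 1)) := hpc t htn
      have hptS : InS G (ct t) (p t) := Or.inr ⟨a, by rw [hct_a t, hmin]⟩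
      rw [hct_a t, hmin]
      exact hv1.tail ⟨hv2, hptS, G.com_symm _ _ hcom⟩
    · have htn' : t = n := by omega
      subst htn'
      rw [hct_a t, Nat.min_self, hpn]
      exact hv1
  have hconn_t : ∀ t ≤ n, G.ConnectedConfig (ct t) := by
    intro t ht b
    by_cases hba : b = a
    · subst hba; exact hC t ht
    · rw [hct_b t b hba]; exact hB t b hba
  -- the connected execution for this phase
  have hEB : EB G c (ct n) := by
    refine ⟨n + 1, fun b t => ct t b, by omega, ?_, ?_, ?_, ?_⟩
    · intro b t ht
      show G.mov (ct t b) (ct (t + 1) b)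
      by_cases hba : b = a
      · subst hba
        rw [hct_a t, hct_a (t + 1), (by omega : min t n = t),
          (by omega : min (t + 1) n = t + 1)]
        exact hpm t (by omega)
      · rw [hct_b t b hba, hct_b (t + 1) b hba]
        exact G.mov_refl _
    · intro t ht
      exact hconn_t t (by omega)
    · intro b
      show ct 0 b = c b
      by_cases hba : b = a
      · subst hba
        rw [hct_a 0, (by simp : min 0 n = 0), hp0]
      · exact hct_b 0 b hba
    · intro b
      show ct (n + 1 - 1) b = ct n b
      rw [Nat.add_sub_cancel]
  have hcna : ct n a = q (d - 1) := by rw [hct_a n, Nat.min_self, hpn]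
  refine ⟨ct n, hconn_t n (le_refl n), hEB, ?_⟩
  -- distance bounds in the new configuration
  have hle : ∀ b : Fin k, b ≠ a →
      dC (Rc G (ct n)) G.base (ct n b) ≤ dC (Rc G c) G.base (c b) := by
    intro b hba
    set mb := dC (Rc G c) G.base (c b) with hmb_def
    obtain ⟨r, hr0, hrm, hre⟩ := pathN_dC (hcr b)
    have hmb_le : mb ≤ d := ha b (Finset.mem_univ b)
    have hS' : ∀ i ≤ mb, InS G (ct n) (r i) := by
      intro i hi
      rcases Nat.eq_or_lt_of_le hi with heq | hlt
      · rw [heq, hrm]; exact Or.inr ⟨b, hct_b n b hba⟩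
      · have hri : dC (Rc G c) G.base (r i) ≤ i :=
          dC_le ⟨r, hr0, rfl, fun j hj => hre j (by omega)⟩
        exact hmemS n (r i) (hre i hlt).1 (hnea _ (by omega))
    exact dC_le ⟨r, hr0, by rw [hrm, hct_b n b hba],
      fun i hi => ⟨hS' i (le_of_lt hi), hS' (i + 1) hi, (hre i hi).2.2⟩⟩
  have hlt_a : dC (Rc G (ct n)) G.base (ct n a) < d := by
    have hSq : ∀ i ≤ d - 1, InS G (ct n) (q i) := by
      intro i hi
      have hqi' : dC (Rc G c) G.base (q i) ≤ i := hqi i (by omega)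
      exact hmemS n (q i) (hqe i (by omega)).1 (hnea _ (by omega))
    have hpath : PathN (Rc G (ct n)) (d - 1) G.base (ct n a) :=
      ⟨q, hq0, by rw [hcna], fun i hi =>
        ⟨hSq i (le_of_lt hi), hSq (i + 1) (by omega), (hqe i (by omega)).2.2⟩⟩
    have := dC_le hpath
    omega
  refine Finset.sum_lt_sum (fun b _ => ?_) ⟨a, Finset.mem_univ a, ?_⟩
  · by_cases hba : b = a
    · subst hba
      rw [← hd_def]
      exact le_of_lt hlt_a
    · exact hle b hba
  · rw [← hd_def]
    exact hlt_a

lemma EB_base_of_zero (c : Fin k → V) (hc : G.ConnectedConfig c)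
    (h0 : ∑ b : Fin k, dC (Rc G c) G.base (c b) = 0) :
    EB G c (fun _ => G.base) := by
  have hcr : ∀ a, ReflTransGen (Rc G c) G.base (c a) := hc
  have hcb : ∀ b, c b = G.base := by
    intro b
    have hz : dC (Rc G c) G.base (c b) = 0 :=
      Finset.sum_eq_zero_iff.mp h0 b (Finset.mem_univ b)
    have hpx := pathN_dC (hcr b)
    rw [hz] at hpx
    obtain ⟨r, hr0, hrm, -⟩ := hpx
    rw [← hrm, hr0]
  have hcfun : c = fun _ => G.base := funext hcb
  rw [hcfun]
  exact EB_refl G (fun a => ReflTransGen.refl)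

lemma toBase (hk : 1 ≤ k) (hSM : G.SightMoveable) :
    ∀ (N : ℕ) (c : Fin k → V), G.ConnectedConfig c →
      ∑ b : Fin k, dC (Rc G c) G.base (c b) ≤ N → EB G c (fun _ => G.base) := by
  intro N
  induction N with
  | zero =>
    intro c hc hle
    exact EB_base_of_zero G c hc (by omega)
  | succ N ih =>
    intro c hc hle
    rcases Nat.eq_zero_or_pos (∑ b : Fin k, dC (Rc G c) G.base (c b)) with h0 | h0
    · exact EB_base_of_zero G c hc h0
    · obtain ⟨c', hc', hEB, hlt⟩ := step G hk hSM c hc h0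
      exact EB_trans G hEB (ih c' hc' (by omega))

end TGAux

/-- In a sight-moveable topological graph, for any two connected
configurations `s` and `g` of `k ≥ 1` agents there is a connected execution
from `s` to `g`. -/
theorem exists_connected_exec_between_connected_configs {V : Type} [Fintype V]
    (G : TopoGraph V) (hSM : G.SightMoveable) (k : ℕ) (hk : 1 ≤ k)
    (s g : Fin k → V) (hs : G.ConnectedConfig s) (hg : G.ConnectedConfig g) :
    ∃ (ℓ : ℕ) (e : Fin k → ℕ → V), 1 ≤ ℓ ∧
      G.IsExecution k ℓ e ∧ G.ConnectedExec ℓ e ∧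
      (∀ a, e a 0 = s a) ∧ (∀ a, e a (ℓ - 1) = g a) := by
  have h1 := TGAux.toBase G hk hSM _ s hs (le_refl _)
  have h2 := TGAux.toBase G hk hSM _ g hg (le_refl _)
  exact TGAux.EB_trans G h1 (TGAux.EB_symm G h2)
end

section
/- Consider the topological graph G₂ with vertex set {B, q₁, q₂, q₃, q₄, q₅, q₆, q₇}, base B, movement edges (together with all self-loops and their symmetric pairs) {B–q₁, q₁–q₂, q₂–q₃, B–q₄, q₄–q₅, q₅–q₆, q₆–B, q₄–q₇, q₇–q₅, q₇–q₃, q₂–q₆}, and communication edges (and their symmetric pairs) {B–q₁, B–q₄, B–q₅, B–q₆, q₂–q₆, q₃–q₅, q₃–q₄, q₅–q₆, q₄–q₅, q₇–q₄, q₇–q₃, q₇–q₅}. Then the execution e of length 5 with 2 agents defined by e₁ = (q₄, q₅, q₆, B, B) and e₂ = (q₃, q₃, q₂, q₁, B) is a connected execution from the configuration (q₄, q₃) to the configuration (B, B). -/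
/-! The topological graph `G₂` of Figure 2: vertices `B = 0, q₁ = 1, …, q₇ = 7`. -/

/-- Movement edges of `G₂` (one orientation each). -/
def movList2 : List (Fin 8 × Fin 8) :=
  [(0, 1), (1, 2), (2, 3), (0, 4), (4, 5), (5, 6), (6, 0), (4, 7), (7, 5), (7, 3), (2, 6)]

/-- Communication edges of `G₂` (one orientation each). -/
def comList2 : List (Fin 8 × Fin 8) :=
  [(0, 1), (0, 4), (0, 5), (0, 6), (2, 6), (3, 5), (3, 4), (5, 6), (4, 5), (7, 4), (7, 3), (7, 5)]

/-- The topological graph `G₂` of Figure 2. -/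
def G2 : TopoGraph (Fin 8) where
  base := 0
  mov u v := u = v ∨ (u, v) ∈ movList2 ∨ (v, u) ∈ movList2
  com u v := (u, v) ∈ comList2 ∨ (v, u) ∈ comList2
  mov_symm := by decide
  mov_refl := by decide
  com_symm := by decide

/-- The execution `e₁ = (q₄, q₅, q₆, B, B)`, `e₂ = (q₃, q₃, q₂, q₁, B)` of length 5. -/
def exFig2 : Fin 2 → ℕ → Fin 8 := fun a t =>
  if a = 0 then [4, 5, 6, 0, 0].getD t 0 else [3, 3, 2, 1, 0].getD t 0

/-- `exFig2` is a connected execution of length 5 from `(q₄, q₃)` to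
`(B, B)` in `G₂`. -/
theorem exFig2_connected :
    G2.IsExecution 2 5 exFig2 ∧ G2.ConnectedExec 5 exFig2 ∧
      (∀ a, exFig2 a 0 = (![4, 3] : Fin 2 → Fin 8) a) ∧
      (∀ a, exFig2 a (5 - 1) = (![0, 0] : Fin 2 → Fin 8) a) := by

  have hcom : ∀ x y : Fin 8, ((x, y) ∈ comList2 ∨ (y, x) ∈ comList2) → G2.com x y := fun _ _ h => h
  have hmov : ∀ x y : Fin 8, (x = y ∨ (x, y) ∈ movList2 ∨ (y, x) ∈ movList2) → G2.mov x y :=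
    fun _ _ h => h
  refine ⟨?_, ?_, by decide, by decide⟩
  · intro a t ht
    have h4 : t < 4 := by omega
    fin_cases a <;> interval_cases t <;> exact hmov _ _ (by decide)
  · intro t ht a
    interval_cases t <;> fin_cases a
    · exact Relation.ReflTransGen.single ⟨Or.inl rfl, Or.inr ⟨0, by decide⟩, hcom _ _ (by decide)⟩
    · exact Relation.ReflTransGen.tail (b := 4)
        (Relation.ReflTransGen.single ⟨Or.inl rfl, Or.inr ⟨0, by decide⟩, hcom _ _ (by decide)⟩)
        ⟨Or.inr ⟨0, by decide⟩, Or.inr ⟨1, by decide⟩, hcom _ _ (by decide)⟩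
    · exact Relation.ReflTransGen.single ⟨Or.inl rfl, Or.inr ⟨0, by decide⟩, hcom _ _ (by decide)⟩
    · exact Relation.ReflTransGen.tail (b := 5)
        (Relation.ReflTransGen.single ⟨Or.inl rfl, Or.inr ⟨0, by decide⟩, hcom _ _ (by decide)⟩)
        ⟨Or.inr ⟨0, by decide⟩, Or.inr ⟨1, by decide⟩, hcom _ _ (by decide)⟩
    · exact Relation.ReflTransGen.single ⟨Or.inl rfl, Or.inr ⟨0, by decide⟩, hcom _ _ (by decide)⟩
    · exact Relation.ReflTransGen.tail (b := 6)
        (Relation.ReflTransGen.single ⟨Or.inl rfl, Or.inr ⟨0, by decide⟩, hcom _ _ (by decide)⟩)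
        ⟨Or.inr ⟨0, by decide⟩, Or.inr ⟨1, by decide⟩, hcom _ _ (by decide)⟩
    · exact Relation.ReflTransGen.refl
    · exact Relation.ReflTransGen.single ⟨Or.inl rfl, Or.inr ⟨1, by decide⟩, hcom _ _ (by decide)⟩
    · exact Relation.ReflTransGen.refl
    · exact Relation.ReflTransGen.refl
end

section
/- The topological graph G₂ with vertex set {B, q₁, q₂, q₃, q₄, q₅, q₆, q₇}, base B, movement edges (together with all self-loops and their symmetric pairs) {B–q₁, q₁–q₂, q₂–q₃, B–q₄, q₄–q₅, q₅–q₆, q₆–B, q₄–q₇, q₇–q₅, q₇–q₃, q₂–q₆}, and communication edges (and their symmetric pairs) {B–q₁, B–q₄, B–q₅, B–q₆, q₂–q₆, q₃–q₅, q₃–q₄, q₅–q₆, q₄–q₅, q₇–q₄, q₇–q₃, q₇–q₅} is a sight-moveable topological graph. -/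
/-- Witness paths for sight-moveability of `G₂`. -/
def pf2 (v v' : Fin 8) : List (Fin 8) :=
  match v, v' with
  | 0, 5 => [0, 4, 5]
  | 5, 0 => [5, 6, 0]
  | 3, 5 => [3, 7, 5]
  | 5, 3 => [5, 7, 3]
  | 3, 4 => [3, 7, 4]
  | 4, 3 => [4, 7, 3]
  | _, _ => [v, v']

instance (u v : Fin 8) : Decidable (G2.com u v) :=
  inferInstanceAs (Decidable ((u, v) ∈ comList2 ∨ (v, u) ∈ comList2))

instance (u v : Fin 8) : Decidable (G2.mov u v) :=
  inferInstanceAs (Decidable (u = v ∨ (u, v) ∈ movList2 ∨ (v, u) ∈ movList2))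

lemma pf2_spec : ∀ v v' : Fin 8, G2.com v v' →
    (pf2 v v').getD 0 v' = v ∧
    (pf2 v v').getD ((pf2 v v').length - 1) v' = v' ∧
    (∀ i < (pf2 v v').length - 1,
      G2.mov ((pf2 v v').getD i v') ((pf2 v v').getD (i + 1) v')) ∧
    (∀ i < (pf2 v v').length - 1, G2.com ((pf2 v v').getD i v') v') := by
  decide

/-- the topological graph `G₂` is sight-moveable. -/
theorem G2_sightMoveable : G2.SightMoveable := by
  intro v v' h
  obtain ⟨h1, h2, h3, h4⟩ := pf2_spec v v' h
  exact ⟨(pf2 v v').length - 1, fun i => (pf2 v v').getD i v', h1, h2, h3, h4⟩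
end
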